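/- arXiv:0909.4722 — 6 statements merged into one kernel-verified Lean document; each statement's English description precedes it below -/
import Mathlib

section
/- Let (V,⊗,I) be a symmetric monoidal closed category admitting equalizers and (T,φ,η,μ) a symmetric monoidal monad on V. Given T-algebras (X,x) and (Y,y), the two morphisms [x,1_Y] : [X,Y] → [TX,Y] and [1_{TX},y] ∘ T_{X,Y} : [X,Y] → [TX,Y] are T-algebra morphisms for the pointwise actions on [X,Y] and [TX,Y]; and if H denotes their equalizer in V^T, then for every T-algebra (Z,z) there is a bijection, natural in (Z,z), between T-algebra morphisms (Z,z) → H and morphisms f : Z ⊗ X → Y in V satisfying y ∘ T(f) ∘ φ_{Z,X} = f ∘ (z ⊗ x). -/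
open CategoryTheory MonoidalCategory Limits

universe v u

/-- A symmetric monoidal monad on a symmetric monoidal category. -/
structure SymMonoidalMonadStr (C : Type u) [Category.{v} C] [MonoidalCategory C]
    [SymmetricCategory C] (T : Monad C) where
  φ : ∀ A B : C, T.obj A ⊗ T.obj B ⟶ T.obj (A ⊗ B)
  ε : 𝟙_ C ⟶ T.obj (𝟙_ C)
  φ_natural : ∀ {A B A' B' : C} (f : A ⟶ A') (g : B ⟶ B'),
    (T.map f ⊗ₘ T.map g) ≫ φ A' B' = φ A B ≫ T.map (f ⊗ₘ g)
  φ_assoc : ∀ A B C' : C,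
    (φ A B ⊗ₘ 𝟙 (T.obj C')) ≫ φ (A ⊗ B) C' ≫ T.map (α_ A B C').hom
      = (α_ (T.obj A) (T.obj B) (T.obj C')).hom ≫ (𝟙 (T.obj A) ⊗ₘ φ B C') ≫ φ A (B ⊗ C')
  φ_left_unit : ∀ A : C,
    (λ_ (T.obj A)).hom = (ε ⊗ₘ 𝟙 (T.obj A)) ≫ φ (𝟙_ C) A ≫ T.map (λ_ A).hom
  φ_right_unit : ∀ A : C,
    (ρ_ (T.obj A)).hom = (𝟙 (T.obj A) ⊗ₘ ε) ≫ φ A (𝟙_ C) ≫ T.map (ρ_ A).hom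
  φ_braided : ∀ A B : C,
    (β_ (T.obj A) (T.obj B)).hom ≫ φ B A = φ A B ≫ T.map (β_ A B).hom
  η_tensor : ∀ A B : C, (T.η.app A ⊗ₘ T.η.app B) ≫ φ A B = T.η.app (A ⊗ B)
  η_unit : ε = T.η.app (𝟙_ C)
  μ_tensor : ∀ A B : C,
    φ (T.obj A) (T.obj B) ≫ T.map (φ A B) ≫ T.μ.app (A ⊗ B)
      = (T.μ.app A ⊗ₘ T.μ.app B) ≫ φ A B
  μ_unit : ε ≫ T.map ε ≫ T.μ.app (𝟙_ C) = ε

variable {V : Type u} [Category.{v} V] [MonoidalCategory V] [SymmetricCategory V]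
  [MonoidalClosed V]

/-- The right evaluation `[X,Y] ⊗ X ⟶ Y` associated to the internal hom. -/
noncomputable def rev (X Y : V) : (ihom X).obj Y ⊗ X ⟶ Y :=
  (β_ ((ihom X).obj Y) X).hom ≫ (ihom.ev X).app Y

/-- The adjunct `Z ⟶ [X,Y]` of a morphism `Z ⊗ X ⟶ Y` with respect to right
evaluation: it is the unique map `h` with `(h ⊗ 𝟙) ≫ rev X Y = g`. -/
noncomputable def radj {Z X Y : V} (g : Z ⊗ X ⟶ Y) : Z ⟶ (ihom X).obj Y :=
  MonoidalClosed.curry ((β_ X Z).hom ≫ g)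

/-- The pointwise `T`-action on the internal hom `[X,Y]`, for `X` an object of `V` and
`y : TY ⟶ Y` a `T`-algebra structure: the adjunct of
`y ∘ T(rev) ∘ φ ∘ (1 ⊗ η_X) : T[X,Y] ⊗ X ⟶ Y`. -/
noncomputable def ptAct (T : Monad V) (M : SymMonoidalMonadStr V T) (X Y : V)
    (y : T.obj Y ⟶ Y) : T.obj ((ihom X).obj Y) ⟶ (ihom X).obj Y :=
  radj ((𝟙 (T.obj ((ihom X).obj Y)) ⊗ₘ T.η.app X) ≫ M.φ ((ihom X).obj Y) X
    ≫ T.map (rev X Y) ≫ y)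

/-- The morphism `T_{X,Y} : [X,Y] ⟶ [TX,TY]`, the adjunct of
`T(rev) ∘ φ ∘ (η_{[X,Y]} ⊗ 1_{TX}) : [X,Y] ⊗ TX ⟶ TY`. -/
noncomputable def THom (T : Monad V) (M : SymMonoidalMonadStr V T) (X Y : V) :
    (ihom X).obj Y ⟶ (ihom (T.obj X)).obj (T.obj Y) :=
  radj ((T.η.app ((ihom X).obj Y) ⊗ₘ 𝟙 (T.obj X)) ≫ M.φ ((ihom X).obj Y) X
    ≫ T.map (rev X Y))

/-- The precomposition map `[x, 1_Y] : [X,Y] ⟶ [X',Y]` induced by `x : X' ⟶ X`. -/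
noncomputable def preHom {X X' : V} (x : X' ⟶ X) (Y : V) :
    (ihom X).obj Y ⟶ (ihom X').obj Y :=
  radj ((((ihom X).obj Y) ◁ x) ≫ rev X Y)

/-!
Uncurrying along the right evaluation (`runcurry`, inverse to `radj`) turns `k : Z ⟶ [X,Y]` into
`f : Z ⊗ X ⟶ Y`. Then `k` commutes with the pointwise actions iff `f` is a map of algebras in its
first variable, tested with the costrength, and `k` equalizes `[x,1]` and `[1,y] ∘ T_{X,Y}` iff `f`
is a map of algebras in its second variable, tested with the strength. Since `φ` factors through
`μ` both as strength followed by costrength and as costrength followed by strength, being an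
algebra map in each variable separately is the same as `y ∘ Tf ∘ φ = f ∘ (z ⊗ x)`. The bijection
is the universal property of the equalizer followed by uncurrying, hence natural in `Z`.
-/

lemma CategoryTheory.Monad.Algebra.map_comp_map_a {C : Type*} [Category C] {T : Monad C}
    (Y : T.Algebra) {P Q : C} (s : P ⟶ T.obj Q) (g : Q ⟶ Y.A) :
    T.map (s ≫ T.map g ≫ Y.a) ≫ Y.a = T.map s ≫ T.μ.app Q ≫ T.map g ≫ Y.a := by
  rw [T.map_comp, T.map_comp, Category.assoc, Category.assoc, ← Y.assoc,
    ← reassoc_of% T.μ.naturality g]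

namespace SymMonoidalMonadStr

variable {C : Type*} [Category C] [MonoidalCategory C] [SymmetricCategory C]
  {T : Monad C} (M : SymMonoidalMonadStr C T)

def strength (A B : C) : A ⊗ T.obj B ⟶ T.obj (A ⊗ B) :=
  (T.η.app A ▷ T.obj B) ≫ M.φ A B

def costrength (A B : C) : T.obj A ⊗ B ⟶ T.obj (A ⊗ B) :=
  (T.obj A ◁ T.η.app B) ≫ M.φ A B

lemma map_whiskerRight_φ {A A' : C} (f : A ⟶ A') (B : C) :
    (T.map f ▷ T.obj B) ≫ M.φ A' B = M.φ A B ≫ T.map (f ▷ B) := by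
  simpa using M.φ_natural f (𝟙 B)

lemma whiskerLeft_map_φ (A : C) {B B' : C} (g : B ⟶ B') :
    (T.obj A ◁ T.map g) ≫ M.φ A B' = M.φ A B ≫ T.map (A ◁ g) := by
  simpa using M.φ_natural (𝟙 A) g

lemma strength_naturality_left {A A' : C} (f : A ⟶ A') (B : C) :
    (f ▷ T.obj B) ≫ M.strength A' B = M.strength A B ≫ T.map (f ▷ B) := by
  rw [strength, strength, ← comp_whiskerRight_assoc,
    show f ≫ T.η.app A' = T.η.app A ≫ T.map f from T.η.naturality f,
    comp_whiskerRight_assoc, map_whiskerRight_φ, Category.assoc]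

lemma costrength_naturality_left {A A' : C} (f : A ⟶ A') (B : C) :
    (T.map f ▷ B) ≫ M.costrength A' B = M.costrength A B ≫ T.map (f ▷ B) := by
  rw [costrength, costrength, ← whisker_exchange_assoc, map_whiskerRight_φ, Category.assoc]

lemma costrength_naturality_right (A : C) {B B' : C} (g : B ⟶ B') :
    (T.obj A ◁ g) ≫ M.costrength A B' = M.costrength A B ≫ T.map (A ◁ g) := by
  rw [costrength, costrength, ← whiskerLeft_comp_assoc,
    show g ≫ T.η.app B' = T.η.app B ≫ T.map g from T.η.naturality g,
    whiskerLeft_comp_assoc, whiskerLeft_map_φ, Category.assoc]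

lemma whiskerRight_η_costrength (A B : C) :
    (T.η.app A ▷ B) ≫ M.costrength A B = T.η.app (A ⊗ B) := by
  rw [costrength, ← M.η_tensor, MonoidalCategory.tensorHom_def, Category.assoc]
  rfl

lemma tensorHom_φ_map_φ_μ {P Q A B : C} (a : P ⟶ T.obj (T.obj A)) (b : Q ⟶ T.obj (T.obj B)) :
    (a ⊗ₘ b) ≫ M.φ (T.obj A) (T.obj B) ≫ T.map (M.φ A B) ≫ T.μ.app (A ⊗ B)
      = ((a ≫ T.μ.app A) ⊗ₘ (b ≫ T.μ.app B)) ≫ M.φ A B := by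
  rw [M.μ_tensor, tensorHom_comp_tensorHom_assoc]

lemma whiskerRight_μ_costrength (A B : C) :
    (T.μ.app A ▷ B) ≫ M.costrength A B
      = M.costrength (T.obj A) B ≫ T.map (M.costrength A B) ≫ T.μ.app (A ⊗ B) := by
  simp only [costrength, T.map_comp, Category.assoc]
  rw [← reassoc_of% M.whiskerLeft_map_φ,
    ← whiskerLeft_comp_assoc, ← id_tensorHom (T.obj (T.obj A)), tensorHom_φ_map_φ_μ]
  simp [MonoidalCategory.tensorHom_def]

lemma strength_map_costrength_μ (A B : C) :
    M.strength (T.obj A) B ≫ T.map (M.costrength A B) ≫ T.μ.app (A ⊗ B) = M.φ A B := by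
  simp only [strength, costrength, T.map_comp, Category.assoc]
  rw [← reassoc_of% M.whiskerLeft_map_φ,
    ← MonoidalCategory.tensorHom_def_assoc, tensorHom_φ_map_φ_μ]
  simp

lemma costrength_map_strength_μ (A B : C) :
    M.costrength A (T.obj B) ≫ T.map (M.strength A B) ≫ T.μ.app (A ⊗ B) = M.φ A B := by
  simp only [strength, costrength, T.map_comp, Category.assoc]
  rw [← reassoc_of% M.map_whiskerRight_φ,
    ← MonoidalCategory.tensorHom_def'_assoc, tensorHom_φ_map_φ_μ]
  simp

def IsBimorphism (Z X Y : T.Algebra) (f : Z.A ⊗ X.A ⟶ Y.A) : Prop :=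
  M.φ Z.A X.A ≫ T.map f ≫ Y.a = (Z.a ⊗ₘ X.a) ≫ f

lemma isBimorphism_iff {Z X Y : T.Algebra} (f : Z.A ⊗ X.A ⟶ Y.A) :
    M.IsBimorphism Z X Y f ↔
      M.costrength Z.A X.A ≫ T.map f ≫ Y.a = (Z.a ▷ X.A) ≫ f ∧
        M.strength Z.A X.A ≫ T.map f ≫ Y.a = (Z.A ◁ X.a) ≫ f := by
  constructor
  · intro h
    constructor
    · rw [costrength, Category.assoc, h, ← id_tensorHom, tensorHom_comp_tensorHom_assoc, X.unit,
        Category.id_comp, tensorHom_id]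
    · rw [strength, Category.assoc, h, ← tensorHom_id, tensorHom_comp_tensorHom_assoc, Z.unit,
        Category.id_comp]
      simp
  · rintro ⟨h_left, h_right⟩
    rw [IsBimorphism, ← M.strength_map_costrength_μ, Category.assoc, Category.assoc,
      ← Y.map_comp_map_a, h_left, T.map_comp, Category.assoc,
      ← reassoc_of% M.strength_naturality_left, h_right, MonoidalCategory.tensorHom_def_assoc]

end SymMonoidalMonadStr

section RightCurrying

variable {W Z X Y : V}

noncomputable def runcurry (k : Z ⟶ (ihom X).obj Y) : Z ⊗ X ⟶ Y :=
  (k ▷ X) ≫ rev X Y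

lemma runcurry_radj (g : Z ⊗ X ⟶ Y) : runcurry (radj g) = g := by
  rw [runcurry, rev, radj, BraidedCategory.braiding_naturality_left_assoc,
    ← MonoidalClosed.uncurry_eq, MonoidalClosed.uncurry_curry, SymmetricCategory.symmetry_assoc]

lemma radj_runcurry (k : Z ⟶ (ihom X).obj Y) : radj (runcurry k) = k := by
  rw [radj, runcurry, rev, BraidedCategory.braiding_naturality_left_assoc,
    SymmetricCategory.symmetry_assoc, ← MonoidalClosed.uncurry_eq, MonoidalClosed.curry_uncurry]

lemma runcurry_injective : Function.Injective (runcurry : (Z ⟶ (ihom X).obj Y) → (Z ⊗ X ⟶ Y)) :=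
  Function.LeftInverse.injective radj_runcurry

lemma runcurry_comp (a : W ⟶ Z) (k : Z ⟶ (ihom X).obj Y) :
    runcurry (a ≫ k) = (a ▷ X) ≫ runcurry k := by
  rw [runcurry, runcurry, comp_whiskerRight_assoc]

lemma runcurry_comp_ihom_map {Y' : V} (k : Z ⟶ (ihom X).obj Y) (g : Y ⟶ Y') :
    runcurry (k ≫ (ihom X).map g) = runcurry k ≫ g := by
  simp only [runcurry, rev, comp_whiskerRight, Category.assoc,
    BraidedCategory.braiding_naturality_left_assoc, ihom.ev_naturality]

end RightCurrying

section PointwiseAction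

variable (T : Monad V) (M : SymMonoidalMonadStr V T)

lemma runcurry_ptAct (X Y : V) (y : T.obj Y ⟶ Y) :
    runcurry (ptAct T M X Y y) = M.costrength ((ihom X).obj Y) X ≫ T.map (rev X Y) ≫ y := by
  rw [ptAct, runcurry_radj, SymMonoidalMonadStr.costrength, id_tensorHom, Category.assoc]

lemma runcurry_THom (X Y : V) :
    runcurry (THom T M X Y) = M.strength ((ihom X).obj Y) X ≫ T.map (rev X Y) := by
  rw [THom, runcurry_radj, SymMonoidalMonadStr.strength, tensorHom_id, Category.assoc]

lemma runcurry_comp_preHom {Z X X' Y : V} (k : Z ⟶ (ihom X).obj Y) (x : X' ⟶ X) :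
    runcurry (k ≫ preHom x Y) = (Z ◁ x) ≫ runcurry k := by
  rw [runcurry_comp, preHom, runcurry_radj, ← whisker_exchange_assoc, runcurry]

lemma runcurry_map_comp_ptAct {Z X Y : V} (y : T.obj Y ⟶ Y) (k : Z ⟶ (ihom X).obj Y) :
    runcurry (T.map k ≫ ptAct T M X Y y) = M.costrength Z X ≫ T.map (runcurry k) ≫ y := by
  rw [runcurry_comp, runcurry_ptAct, reassoc_of% M.costrength_naturality_left k X,
    ← Functor.map_comp_assoc, runcurry]

lemma runcurry_comp_THom_map {Z X Y : V} (y : T.obj Y ⟶ Y) (k : Z ⟶ (ihom X).obj Y) :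
    runcurry (k ≫ THom T M X Y ≫ (ihom (T.obj X)).map y)
      = M.strength Z X ≫ T.map (runcurry k) ≫ y := by
  rw [← Category.assoc, runcurry_comp_ihom_map, runcurry_comp, runcurry_THom, Category.assoc,
    Category.assoc, reassoc_of% M.strength_naturality_left k X, ← Functor.map_comp_assoc,
    runcurry]

lemma map_comp_ptAct_eq_iff {Z X Y : V} (z : T.obj Z ⟶ Z) (y : T.obj Y ⟶ Y)
    (k : Z ⟶ (ihom X).obj Y) :
    T.map k ≫ ptAct T M X Y y = z ≫ k ↔
      M.costrength Z X ≫ T.map (runcurry k) ≫ y = (z ▷ X) ≫ runcurry k := by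
  rw [← runcurry_injective.eq_iff, runcurry_map_comp_ptAct, runcurry_comp]

lemma comp_preHom_eq_comp_THom_map_iff {Z X Y : V} (x : T.obj X ⟶ X) (y : T.obj Y ⟶ Y)
    (k : Z ⟶ (ihom X).obj Y) :
    k ≫ preHom x Y = k ≫ THom T M X Y ≫ (ihom (T.obj X)).map y ↔
      M.strength Z X ≫ T.map (runcurry k) ≫ y = (Z ◁ x) ≫ runcurry k := by
  rw [← runcurry_injective.eq_iff, runcurry_comp_preHom, runcurry_comp_THom_map, eq_comm]

lemma ptAct_unit (X : V) (Y : T.Algebra) :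
    T.η.app ((ihom X).obj Y.A) ≫ ptAct T M X Y.A Y.a = 𝟙 ((ihom X).obj Y.A) := by
  apply runcurry_injective
  rw [runcurry_comp, runcurry_ptAct,
    reassoc_of% M.whiskerRight_η_costrength ((ihom X).obj Y.A) X,
    ← reassoc_of% T.η.naturality (rev X Y.A), Y.unit]
  simp [runcurry]

lemma ptAct_assoc (X : V) (Y : T.Algebra) :
    T.μ.app ((ihom X).obj Y.A) ≫ ptAct T M X Y.A Y.a
      = T.map (ptAct T M X Y.A Y.a) ≫ ptAct T M X Y.A Y.a := by
  rw [eq_comm, map_comp_ptAct_eq_iff, runcurry_ptAct, Y.map_comp_map_a,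
    reassoc_of% M.whiskerRight_μ_costrength]

lemma preHom_hom (X Y : T.Algebra) :
    T.map (preHom X.a Y.A) ≫ ptAct T M (T.obj X.A) Y.A Y.a
      = ptAct T M X.A Y.A Y.a ≫ preHom X.a Y.A := by
  apply runcurry_injective
  rw [runcurry_map_comp_ptAct, runcurry_comp_preHom, runcurry_ptAct, preHom, runcurry_radj,
    reassoc_of% M.costrength_naturality_right, T.map_comp_assoc]

lemma THom_map_hom (X Y : T.Algebra) :
    T.map (THom T M X.A Y.A ≫ (ihom (T.obj X.A)).map Y.a) ≫ ptAct T M (T.obj X.A) Y.A Y.a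
      = ptAct T M X.A Y.A Y.a ≫ THom T M X.A Y.A ≫ (ihom (T.obj X.A)).map Y.a := by
  apply runcurry_injective
  -- Both sides reduce to `φ ≫ T(rev) ≫ y`, the two composites of strength and costrength.
  rw [runcurry_map_comp_ptAct, runcurry_comp_ihom_map, runcurry_THom, runcurry_comp_THom_map,
    runcurry_ptAct, Category.assoc, Y.map_comp_map_a, Y.map_comp_map_a,
    reassoc_of% M.costrength_map_strength_μ, reassoc_of% M.strength_map_costrength_μ]

end PointwiseAction

section PointwiseAlgebra

variable (T : Monad V) (M : SymMonoidalMonadStr V T)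

noncomputable def ptAlg (X : V) (Y : T.Algebra) : T.Algebra where
  A := (ihom X).obj Y.A
  a := ptAct T M X Y.A Y.a
  unit := ptAct_unit T M X Y
  assoc := ptAct_assoc T M X Y

noncomputable def preHomAlgHom (X Y : T.Algebra) :
    ptAlg T M X.A Y ⟶ ptAlg T M (T.obj X.A) Y where
  f := preHom X.a Y.A
  h := preHom_hom T M X Y

noncomputable def THomAlgHom (X Y : T.Algebra) :
    ptAlg T M X.A Y ⟶ ptAlg T M (T.obj X.A) Y where
  f := THom T M X.A Y.A ≫ (ihom (T.obj X.A)).map Y.a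
  h := THom_map_hom T M X Y

noncomputable def equalizingHomEquivBimorphism (X Y Z : T.Algebra) :
    {h : Z ⟶ ptAlg T M X.A Y // h ≫ preHomAlgHom T M X Y = h ≫ THomAlgHom T M X Y} ≃
      {f : Z.A ⊗ X.A ⟶ Y.A // M.IsBimorphism Z X Y f} where
  toFun h := ⟨runcurry h.1.f, (M.isBimorphism_iff _).2
    ⟨(map_comp_ptAct_eq_iff T M Z.a Y.a h.1.f).1 h.1.h,
      (comp_preHom_eq_comp_THom_map_iff T M X.a Y.a h.1.f).1 (congrArg Monad.Algebra.Hom.f h.2)⟩⟩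
  invFun f :=
    have hf := (M.isBimorphism_iff f.1).1 f.2
    ⟨⟨radj f.1, (map_comp_ptAct_eq_iff T M Z.a Y.a _).2 (by rw [runcurry_radj]; exact hf.1)⟩,
      Monad.Algebra.Hom.ext
        ((comp_preHom_eq_comp_THom_map_iff T M X.a Y.a _).2 (by rw [runcurry_radj]; exact hf.2))⟩
  left_inv h := Subtype.ext (Monad.Algebra.Hom.ext (radj_runcurry h.1.f))
  right_inv f := Subtype.ext (runcurry_radj f.1)

end PointwiseAlgebra

theorem algebra_hom_equalizer_bijection_general
    (T : Monad V) (M : SymMonoidalMonadStr V T) (X Y : T.Algebra) :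
    ∃ (h₁ : T.η.app ((ihom X.A).obj Y.A) ≫ ptAct T M X.A Y.A Y.a
        = 𝟙 ((ihom X.A).obj Y.A))
      (h₂ : T.μ.app ((ihom X.A).obj Y.A) ≫ ptAct T M X.A Y.A Y.a
        = T.map (ptAct T M X.A Y.A Y.a) ≫ ptAct T M X.A Y.A Y.a)
      (h₁' : T.η.app ((ihom (T.obj X.A)).obj Y.A) ≫ ptAct T M (T.obj X.A) Y.A Y.a
        = 𝟙 ((ihom (T.obj X.A)).obj Y.A))
      (h₂' : T.μ.app ((ihom (T.obj X.A)).obj Y.A) ≫ ptAct T M (T.obj X.A) Y.A Y.a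
        = T.map (ptAct T M (T.obj X.A) Y.A Y.a) ≫ ptAct T M (T.obj X.A) Y.A Y.a)
      (hm₁ : T.map (preHom X.a Y.A) ≫ ptAct T M (T.obj X.A) Y.A Y.a
        = ptAct T M X.A Y.A Y.a ≫ preHom X.a Y.A)
      (hm₂ : T.map (THom T M X.A Y.A ≫ (ihom (T.obj X.A)).map Y.a)
          ≫ ptAct T M (T.obj X.A) Y.A Y.a
        = ptAct T M X.A Y.A Y.a ≫ (THom T M X.A Y.A ≫ (ihom (T.obj X.A)).map Y.a)),
      ∀ (H : T.Algebra)
        (e : H ⟶ (⟨(ihom X.A).obj Y.A, ptAct T M X.A Y.A Y.a, h₁, h₂⟩ : T.Algebra))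
        (w : e ≫ (⟨preHom X.a Y.A, hm₁⟩ :
              (⟨(ihom X.A).obj Y.A, ptAct T M X.A Y.A Y.a, h₁, h₂⟩ : T.Algebra) ⟶
              (⟨(ihom (T.obj X.A)).obj Y.A, ptAct T M (T.obj X.A) Y.A Y.a, h₁', h₂'⟩ :
                T.Algebra))
            = e ≫ (⟨THom T M X.A Y.A ≫ (ihom (T.obj X.A)).map Y.a, hm₂⟩ :
              (⟨(ihom X.A).obj Y.A, ptAct T M X.A Y.A Y.a, h₁, h₂⟩ : T.Algebra) ⟶
              (⟨(ihom (T.obj X.A)).obj Y.A, ptAct T M (T.obj X.A) Y.A Y.a, h₁', h₂'⟩ :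
                T.Algebra))),
        IsLimit (Fork.ofι e w) →
        ∃ (bij : ∀ Z : T.Algebra, (Z ⟶ H) ≃
            {f : Z.A ⊗ X.A ⟶ Y.A //
              M.φ Z.A X.A ≫ T.map f ≫ Y.a = (Z.a ⊗ₘ X.a) ≫ f}),
          ∀ (Z Z' : T.Algebra) (g : Z' ⟶ Z) (h : Z ⟶ H),
            (bij Z' (g ≫ h)).val = (g.f ⊗ₘ 𝟙 X.A) ≫ (bij Z h).val := by
  refine ⟨ptAct_unit T M X.A Y, ptAct_assoc T M X.A Y, ptAct_unit T M (T.obj X.A) Y,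
    ptAct_assoc T M (T.obj X.A) Y, preHom_hom T M X Y, THom_map_hom T M X Y, ?_⟩
  intro H e w hH
  refine ⟨fun Z => (Fork.IsLimit.homIso hH Z).trans (equalizingHomEquivBimorphism T M X Y Z), ?_⟩
  intro Z Z' g h
  show runcurry ((g ≫ h) ≫ e).f = (g.f ⊗ₘ 𝟙 X.A) ≫ runcurry (h ≫ e).f
  rw [Category.assoc, Monad.Algebra.comp_f, runcurry_comp, tensorHom_id]

/-- for `T`-algebras `(X,x)` and `(Y,y)`, the morphisms
`[x,1_Y]` and `[1_{TX},y] ∘ T_{X,Y} : [X,Y] ⟶ [TX,Y]` are `T`-algebra morphisms for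
the pointwise actions, and if `H` denotes their equalizer in `V^T` then, naturally in
a `T`-algebra `(Z,z)`, morphisms of algebras `(Z,z) ⟶ H` are in bijection with
morphisms `f : Z ⊗ X ⟶ Y` of `V` satisfying `y ∘ Tf ∘ φ_{Z,X} = f ∘ (z ⊗ x)`. -/
theorem algebra_hom_equalizer_bijection [HasEqualizers V]
    (T : Monad V) (M : SymMonoidalMonadStr V T) (X Y : T.Algebra) :
    ∃ (h₁ : T.η.app ((ihom X.A).obj Y.A) ≫ ptAct T M X.A Y.A Y.a
        = 𝟙 ((ihom X.A).obj Y.A))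
      (h₂ : T.μ.app ((ihom X.A).obj Y.A) ≫ ptAct T M X.A Y.A Y.a
        = T.map (ptAct T M X.A Y.A Y.a) ≫ ptAct T M X.A Y.A Y.a)
      (h₁' : T.η.app ((ihom (T.obj X.A)).obj Y.A) ≫ ptAct T M (T.obj X.A) Y.A Y.a
        = 𝟙 ((ihom (T.obj X.A)).obj Y.A))
      (h₂' : T.μ.app ((ihom (T.obj X.A)).obj Y.A) ≫ ptAct T M (T.obj X.A) Y.A Y.a
        = T.map (ptAct T M (T.obj X.A) Y.A Y.a) ≫ ptAct T M (T.obj X.A) Y.A Y.a)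
      (hm₁ : T.map (preHom X.a Y.A) ≫ ptAct T M (T.obj X.A) Y.A Y.a
        = ptAct T M X.A Y.A Y.a ≫ preHom X.a Y.A)
      (hm₂ : T.map (THom T M X.A Y.A ≫ (ihom (T.obj X.A)).map Y.a)
          ≫ ptAct T M (T.obj X.A) Y.A Y.a
        = ptAct T M X.A Y.A Y.a ≫ (THom T M X.A Y.A ≫ (ihom (T.obj X.A)).map Y.a)),
      ∀ (H : T.Algebra)
        (e : H ⟶ (⟨(ihom X.A).obj Y.A, ptAct T M X.A Y.A Y.a, h₁, h₂⟩ : T.Algebra))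
        (w : e ≫ (⟨preHom X.a Y.A, hm₁⟩ :
              (⟨(ihom X.A).obj Y.A, ptAct T M X.A Y.A Y.a, h₁, h₂⟩ : T.Algebra) ⟶
              (⟨(ihom (T.obj X.A)).obj Y.A, ptAct T M (T.obj X.A) Y.A Y.a, h₁', h₂'⟩ :
                T.Algebra))
            = e ≫ (⟨THom T M X.A Y.A ≫ (ihom (T.obj X.A)).map Y.a, hm₂⟩ :
              (⟨(ihom X.A).obj Y.A, ptAct T M X.A Y.A Y.a, h₁, h₂⟩ : T.Algebra) ⟶
              (⟨(ihom (T.obj X.A)).obj Y.A, ptAct T M (T.obj X.A) Y.A Y.a, h₁', h₂'⟩ :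
                T.Algebra))),
        IsLimit (Fork.ofι e w) →
        ∃ (bij : ∀ Z : T.Algebra, (Z ⟶ H) ≃
            {f : Z.A ⊗ X.A ⟶ Y.A //
              M.φ Z.A X.A ≫ T.map f ≫ Y.a = (Z.a ⊗ₘ X.a) ≫ f}),
          ∀ (Z Z' : T.Algebra) (g : Z' ⟶ Z) (h : Z ⟶ H),
            (bij Z' (g ≫ h)).val = (g.f ⊗ₘ 𝟙 X.A) ≫ (bij Z h).val :=
  algebra_hom_equalizer_bijection_general T M X Y
end

section
/- Let (V,⊗,I) be a symmetric monoidal closed category and (T,φ,η,μ) a symmetric monoidal monad on V. Given T-algebras (X,x) and (Y,y), the composite [1_{TX}, y] ∘ T_{X,Y} : [X,Y] → [TX,Y] is a T-algebra morphism, where [X,Y] and [TX,Y] are equipped with their pointwise T-algebra structures. -/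
open CategoryTheory MonoidalCategory Limits

universe v u

variable {V : Type u} [Category.{v} V] [MonoidalCategory V] [SymmetricCategory V]
  [MonoidalClosed V]

/-
Morphisms into an internal hom are determined by their uncurried forms. Write
`M.extend Y g := y ∘ T g ∘ φ : TH ⊗ TA ⟶ Y` for the extension of `g : H ⊗ A ⟶ Y` into the
algebra `(Y,y)`. Then `f := [1,y] ∘ T_{X,Y}` uncurries to `(extend rev) ∘ (η ⊗ 1)` and the
pointwise action to `(extend rev) ∘ (1 ⊗ η)`. Extending twice is extending once after
`μ ⊗ μ`, so by the unit laws of the monad both composites around the square uncurry to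
`extend rev` itself.
-/

lemma radj_rev {Z X Y : V} (g : Z ⊗ X ⟶ Y) : (radj g ▷ X) ≫ rev X Y = g := by
  unfold radj rev
  rw [← Category.assoc, ← tensorHom_id, BraidedCategory.braiding_naturality, Category.assoc,
    id_tensorHom, ← MonoidalClosed.uncurry_eq, MonoidalClosed.uncurry_curry,
    SymmetricCategory.symmetry_assoc]

lemma rev_ext {Z X Y : V} {h₁ h₂ : Z ⟶ (ihom X).obj Y}
    (w : (h₁ ▷ X) ≫ rev X Y = (h₂ ▷ X) ≫ rev X Y) : h₁ = h₂ := by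
  have uncurry_eq : ∀ h : Z ⟶ (ihom X).obj Y,
      MonoidalClosed.uncurry h = (β_ X Z).hom ≫ (h ▷ X) ≫ rev X Y := by
    intro h
    rw [MonoidalClosed.uncurry_eq, rev, ← tensorHom_id,
      ← BraidedCategory.braiding_naturality_assoc, SymmetricCategory.symmetry_assoc,
      id_tensorHom]
  apply MonoidalClosed.uncurry_injective
  rw [uncurry_eq, uncurry_eq, w]

lemma ihom_map_rev {A Y Y' : V} (y : Y ⟶ Y') :
    ((ihom A).map y ▷ A) ≫ rev A Y' = rev A Y ≫ y := by
  unfold rev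
  rw [← tensorHom_id, BraidedCategory.braiding_naturality_assoc, id_tensorHom,
    Category.assoc]
  exact congrArg _ ((ihom.ev A).naturality y)

namespace SymMonoidalMonadStr

variable {C : Type u} [Category.{v} C] [MonoidalCategory C] [SymmetricCategory C]
  {T : Monad C} (M : SymMonoidalMonadStr C T)

noncomputable def extend {H A : C} (B : T.Algebra) (g : H ⊗ A ⟶ B.A) :
    T.obj H ⊗ T.obj A ⟶ B.A :=
  M.φ H A ≫ T.map g ≫ B.a

lemma extend_tensorHom_comp {H A H' A' : C} (B : T.Algebra) (f : H ⟶ H') (f' : A ⟶ A')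
    (g : H' ⊗ A' ⟶ B.A) :
    M.extend B ((f ⊗ₘ f') ≫ g) = (T.map f ⊗ₘ T.map f') ≫ M.extend B g := by
  rw [extend, extend, Functor.map_comp_assoc, reassoc_of% (M.φ_natural f f')]

lemma extend_extend {H A : C} (B : T.Algebra) (g : H ⊗ A ⟶ B.A) :
    M.extend B (M.extend B g) = (T.μ.app H ⊗ₘ T.μ.app A) ≫ M.extend B g := by
  have μ_naturality : T.map (T.map g) ≫ T.μ.app B.A = T.μ.app (H ⊗ A) ≫ T.map g :=
    T.μ.naturality g
  simp only [extend, Functor.map_comp, Category.assoc]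
  rw [← B.assoc, reassoc_of% μ_naturality, reassoc_of% (M.μ_tensor H A)]

lemma whiskerLeft_η_extend_whiskerRight_η {H A : C} (B : T.Algebra) (g : H ⊗ A ⟶ B.A) :
    (T.obj H ◁ T.η.app (T.obj A)) ≫ M.extend B ((T.η.app H ▷ T.obj A) ≫ M.extend B g)
      = M.extend B g := by
  rw [← tensorHom_id, extend_tensorHom_comp, extend_extend, ← id_tensorHom,
    tensorHom_comp_tensorHom_assoc, tensorHom_comp_tensorHom_assoc]
  simp

lemma whiskerRight_η_extend_whiskerLeft_η {H A : C} (B : T.Algebra) (g : H ⊗ A ⟶ B.A) :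
    (T.η.app (T.obj H) ▷ T.obj A) ≫ M.extend B ((T.obj H ◁ T.η.app A) ≫ M.extend B g)
      = M.extend B g := by
  rw [← id_tensorHom, extend_tensorHom_comp, extend_extend, ← tensorHom_id,
    tensorHom_comp_tensorHom_assoc, tensorHom_comp_tensorHom_assoc]
  simp

lemma whiskerRight_comp_whiskerRight_η_extend {Z H A : C} (B : T.Algebra) (p : Z ⟶ H)
    (g : H ⊗ A ⟶ B.A) :
    (p ▷ T.obj A) ≫ (T.η.app H ▷ T.obj A) ≫ M.extend B g
      = (T.η.app Z ▷ T.obj A) ≫ M.extend B ((p ▷ A) ≫ g) := by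
  have η_naturality : p ≫ T.η.app H = T.η.app Z ≫ T.map p := T.η.naturality p
  rw [← comp_whiskerRight_assoc, η_naturality, comp_whiskerRight_assoc,
    ← tensorHom_id (T.map p), ← T.map_id, ← extend_tensorHom_comp, tensorHom_id]

end SymMonoidalMonadStr

open SymMonoidalMonadStr

section PointwiseAction

variable {T : Monad V} (M : SymMonoidalMonadStr V T)

lemma ptAct_rev (A : V) (B : T.Algebra) :
    (ptAct T M A B.A B.a ▷ A) ≫ rev A B.A
      = (T.obj ((ihom A).obj B.A) ◁ T.η.app A) ≫ M.extend B (rev A B.A) := by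
  rw [ptAct, radj_rev, id_tensorHom]
  rfl

lemma map_comp_ptAct_rev {Z A : V} (B : T.Algebra) (h : Z ⟶ (ihom A).obj B.A) :
    ((T.map h ≫ ptAct T M A B.A B.a) ▷ A) ≫ rev A B.A
      = (T.obj Z ◁ T.η.app A) ≫ M.extend B ((h ▷ A) ≫ rev A B.A) := by
  rw [comp_whiskerRight_assoc, ptAct_rev, ← whisker_exchange_assoc, ← tensorHom_id,
    ← T.map_id, ← M.extend_tensorHom_comp, tensorHom_id]

lemma THom_comp_map_rev (A : V) (B : T.Algebra) :
    ((THom T M A B.A ≫ (ihom (T.obj A)).map B.a) ▷ T.obj A) ≫ rev (T.obj A) B.A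
      = (T.η.app ((ihom A).obj B.A) ▷ T.obj A) ≫ M.extend B (rev A B.A) := by
  rw [comp_whiskerRight_assoc, ihom_map_rev, THom, reassoc_of% radj_rev, tensorHom_id]
  simp only [extend, Category.assoc]

end PointwiseAction

/-- for `T`-algebras `(X,x)` and `(Y,y)`, the composite
`[1_{TX}, y] ∘ T_{X,Y} : [X,Y] ⟶ [TX,Y]` is a morphism of `T`-algebras, where `[X,Y]`
and `[TX,Y]` carry their pointwise `T`-algebra structures. -/
theorem THom_comp_postcompose_is_algebra_hom (T : Monad V) (M : SymMonoidalMonadStr V T)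
    (X Y : T.Algebra) :
    T.map (THom T M X.A Y.A ≫ (ihom (T.obj X.A)).map Y.a)
        ≫ ptAct T M (T.obj X.A) Y.A Y.a
      = ptAct T M X.A Y.A Y.a ≫ (THom T M X.A Y.A ≫ (ihom (T.obj X.A)).map Y.a) := by
  apply rev_ext
  calc _ = M.extend Y (rev X.A Y.A) := by
        rw [map_comp_ptAct_rev, THom_comp_map_rev, whiskerLeft_η_extend_whiskerRight_η]
    _ = _ := by
        rw [comp_whiskerRight_assoc, THom_comp_map_rev, whiskerRight_comp_whiskerRight_η_extend,
          ptAct_rev, whiskerRight_η_extend_whiskerLeft_η]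
end

section
/- Let (T,φ,η,μ) be a symmetric monoidal monad on a symmetric monoidal category (V,⊗,I) and let Z₁, Z₂ be objects of V. Set α = T(μ_{Z₁} ⊗ μ_{Z₂}) and β = μ_{TZ₁⊗TZ₂} ∘ T(φ_{TZ₁,TZ₂}), both morphisms T(T²Z₁ ⊗ T²Z₂) → T(TZ₁ ⊗ TZ₂), and set q = μ_{Z₁⊗Z₂} ∘ T(φ_{Z₁,Z₂}) : T(TZ₁ ⊗ TZ₂) → T(Z₁ ⊗ Z₂). Then q ∘ α = q ∘ β, and the morphisms s = T(η_{Z₁} ⊗ η_{Z₂}) : T(Z₁ ⊗ Z₂) → T(TZ₁ ⊗ TZ₂) and t = T(Tη_{Z₁} ⊗ Tη_{Z₂}) : T(TZ₁ ⊗ TZ₂) → T(T²Z₁ ⊗ T²Z₂) exhibit q as a split coequalizer of α and β: q ∘ s = 1, α ∘ t = 1, and β ∘ t = s ∘ q. In particular q is the (absolute) coequalizer of α and β. -/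
open CategoryTheory MonoidalCategory Limits

universe v u

/-! The map `q = μ ∘ Tφ` is the Kleisli extension of `φ`. It coequalizes `α` and `β`
because `μ` is monoidal (`μ_tensor`) and `μ` is associative; the sections `s = T(η ⊗ η)`
and `t = T(Tη ⊗ Tη)` split the fork by the unit laws of the monad, the monoidality of `η`
and the naturality of `q`. A split coequalizer is a coequalizer. -/

/-- In `IsSplitCoequalizer f g π` the left section splits `g`, whereas in the theorem the
section `t` splits the first map `α`; this is the coequalizer with the pair in that order. -/
def CategoryTheory.IsSplitCoequalizer.isCoequalizerSymm {C : Type*} [Category C]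
    {X Y Z : C} {f g : X ⟶ Y} {π : Y ⟶ Z} (t : IsSplitCoequalizer f g π)
    (w : g ≫ π = f ≫ π) : IsColimit (Cofork.ofπ π w) :=
  Cofork.IsColimit.mk' _ fun s =>
    ⟨t.rightSection ≫ s.π, by simp [← t.leftSection_top_assoc, ← s.condition],
      fun hm => by simp [← hm]⟩

lemma CategoryTheory.Monad.tensorHom_map_η_comp_tensorHom_μ {V : Type u} [Category.{v} V]
    [MonoidalCategory V] (T : Monad V) (A B : V) :
    (T.map (T.η.app A) ⊗ₘ T.map (T.η.app B)) ≫ (T.μ.app A ⊗ₘ T.μ.app B)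
      = 𝟙 (T.obj A ⊗ T.obj B) := by
  rw [tensorHom_comp_tensorHom, T.right_unit, T.right_unit, id_tensorHom_id]
  rfl

namespace SymMonoidalMonadStr

variable {V : Type u} [Category.{v} V] [MonoidalCategory V] [SymmetricCategory V]
  {T : Monad V} (M : SymMonoidalMonadStr V T)

def kleisliφ (A B : V) : T.obj (T.obj A ⊗ T.obj B) ⟶ T.obj (A ⊗ B) :=
  T.map (M.φ A B) ≫ T.μ.app (A ⊗ B)

lemma map_tensorHom_map_comp_kleisliφ {A B A' B' : V} (f : A ⟶ A') (g : B ⟶ B') :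
    T.map (T.map f ⊗ₘ T.map g) ≫ M.kleisliφ A' B' = M.kleisliφ A B ≫ T.map (f ⊗ₘ g) := by
  have hμ := T.μ.naturality (f ⊗ₘ g)
  dsimp only [Functor.comp_map, Functor.comp_obj, Functor.id_obj, Functor.id_map] at hμ
  rw [kleisliφ, kleisliφ, ← Category.assoc, ← T.map_comp, M.φ_natural, T.map_comp,
    Category.assoc, hμ, Category.assoc]

lemma map_tensorHom_η_comp_kleisliφ (A B : V) :
    T.map (T.η.app A ⊗ₘ T.η.app B) ≫ M.kleisliφ A B = 𝟙 (T.obj (A ⊗ B)) := by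
  rw [kleisliφ, ← Category.assoc, ← T.map_comp, M.η_tensor]
  exact T.right_unit (A ⊗ B)

lemma map_tensorHom_μ_comp_kleisliφ (A B : V) :
    T.map (T.μ.app A ⊗ₘ T.μ.app B) ≫ M.kleisliφ A B
      = M.kleisliφ (T.obj A) (T.obj B) ≫ M.kleisliφ A B := by
  have hμ := T.μ.naturality (M.φ A B)
  have hassoc := T.assoc (A ⊗ B)
  dsimp only [Functor.comp_map, Functor.comp_obj, Functor.id_obj, Functor.id_map] at hμ hassoc
  calc T.map (T.μ.app A ⊗ₘ T.μ.app B) ≫ M.kleisliφ A B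
      = T.map (M.φ (T.obj A) (T.obj B)) ≫ T.map (T.map (M.φ A B))
          ≫ T.map (T.μ.app (A ⊗ B)) ≫ T.μ.app (A ⊗ B) := by
        rw [kleisliφ, ← Category.assoc, ← T.map_comp, ← M.μ_tensor]
        simp only [Functor.map_comp, Category.assoc]
    _ = M.kleisliφ (T.obj A) (T.obj B) ≫ M.kleisliφ A B := by
        rw [hassoc, reassoc_of% hμ, kleisliφ, kleisliφ, Category.assoc]

def isSplitCoequalizer (A B : V) :
    IsSplitCoequalizer (M.kleisliφ (T.obj A) (T.obj B)) (T.map (T.μ.app A ⊗ₘ T.μ.app B))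
      (M.kleisliφ A B) where
  rightSection := T.map (T.η.app A ⊗ₘ T.η.app B)
  leftSection := T.map (T.map (T.η.app A) ⊗ₘ T.map (T.η.app B))
  condition := (M.map_tensorHom_μ_comp_kleisliφ A B).symm
  rightSection_π := M.map_tensorHom_η_comp_kleisliφ A B
  leftSection_bottom := by rw [← T.map_comp, T.tensorHom_map_η_comp_tensorHom_μ, T.map_id]
  leftSection_top := M.map_tensorHom_map_comp_kleisliφ _ _

end SymMonoidalMonadStr

/-- for objects `Z₁, Z₂` of `V`, the morphism
`q = μ ∘ Tφ : T(TZ₁ ⊗ TZ₂) ⟶ T(Z₁ ⊗ Z₂)` coequalizes `α = T(μ ⊗ μ)` and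
`β = μ ∘ Tφ : T(T²Z₁ ⊗ T²Z₂) ⟶ T(TZ₁ ⊗ TZ₂)`, and `s = T(η ⊗ η)`,
`t = T(Tη ⊗ Tη)` exhibit `q` as a split coequalizer of `α` and `β`; in particular `q`
is the coequalizer of `α` and `β`. -/
theorem tensor_of_frees_split_coequalizer {V : Type u} [Category.{v} V]
    [MonoidalCategory V] [SymmetricCategory V]
    (T : Monad V) (M : SymMonoidalMonadStr V T) (Z₁ Z₂ : V) :
    ∃ w : T.map (T.μ.app Z₁ ⊗ₘ T.μ.app Z₂)
          ≫ (T.map (M.φ Z₁ Z₂) ≫ T.μ.app (Z₁ ⊗ Z₂))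
        = (T.map (M.φ (T.obj Z₁) (T.obj Z₂)) ≫ T.μ.app (T.obj Z₁ ⊗ T.obj Z₂))
          ≫ (T.map (M.φ Z₁ Z₂) ≫ T.μ.app (Z₁ ⊗ Z₂)),
      (T.map (T.η.app Z₁ ⊗ₘ T.η.app Z₂) ≫ (T.map (M.φ Z₁ Z₂) ≫ T.μ.app (Z₁ ⊗ Z₂))
          = 𝟙 (T.obj (Z₁ ⊗ Z₂))) ∧
      (T.map (T.map (T.η.app Z₁) ⊗ₘ T.map (T.η.app Z₂))
          ≫ T.map (T.μ.app Z₁ ⊗ₘ T.μ.app Z₂) = 𝟙 (T.obj (T.obj Z₁ ⊗ T.obj Z₂))) ∧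
      (T.map (T.map (T.η.app Z₁) ⊗ₘ T.map (T.η.app Z₂))
          ≫ (T.map (M.φ (T.obj Z₁) (T.obj Z₂)) ≫ T.μ.app (T.obj Z₁ ⊗ T.obj Z₂))
        = (T.map (M.φ Z₁ Z₂) ≫ T.μ.app (Z₁ ⊗ Z₂))
          ≫ T.map (T.η.app Z₁ ⊗ₘ T.η.app Z₂)) ∧
      Nonempty (IsColimit (Cofork.ofπ (T.map (M.φ Z₁ Z₂) ≫ T.μ.app (Z₁ ⊗ Z₂)) w)) := by
  let split := M.isSplitCoequalizer Z₁ Z₂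
  exact ⟨split.condition.symm, split.rightSection_π, split.leftSection_bottom,
    split.leftSection_top, ⟨split.isCoequalizerSymm _⟩⟩
end

section
/- Let V be a locally cartesian closed category with a terminal object and all small colimits (in particular every pullback functor between slice categories of V has a right adjoint). Let S and T be endofunctors of V and φ : S ⟶ T a cartesian natural transformation, i.e. every naturality square of φ is a pullback. If T preserves all small colimits, then S preserves all small colimits. -/
/-!
Write `⊤` for the terminal object. Cartesianness of `φ` at the maps `X ⟶ ⊤` says that `S X` is the
pullback of `T X ⟶ T ⊤` along `φ_⊤ : S ⊤ ⟶ T ⊤`, naturally in `X`. So `S` factors as `T`, lifted to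
the slice over `T ⊤`, followed by pullback along `φ_⊤` and the forgetful functor to `V`. The first
factor preserves colimits because `T` does and the forgetful functor reflects them, pullback along
`φ_⊤` is a left adjoint by local cartesian closedness, and the forgetful functor from the slice over
`S ⊤` is left adjoint to `S ⊤ × -`.
-/

open CategoryTheory Limits

universe v u

namespace CategoryTheory

variable {C : Type*} {D : Type*} [Category C] [Category D] [HasTerminal C]

@[simps! obj_left obj_hom map_left]
noncomputable def Functor.toOverMapTerminal (F : C ⥤ D) : C ⥤ Over (F.obj (⊤_ C)) where
  obj X := Over.mk (F.map (terminal.from X))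
  map g := Over.homMk (F.map g) (by simp [← F.map_comp])

instance Functor.preservesColimitsOfShape_toOverMapTerminal {J : Type*} [Category J]
    (F : C ⥤ D) [PreservesColimitsOfShape J F] :
    PreservesColimitsOfShape J F.toOverMapTerminal :=
  have : PreservesColimitsOfShape J (F.toOverMapTerminal ⋙ Over.forget _) :=
    inferInstanceAs (PreservesColimitsOfShape J F)
  preservesColimitsOfShape_of_reflects_of_preserves _ (Over.forget _)

namespace NatTrans.Equifibered

variable {S T : C ⥤ C} {φ : S ⟶ T}

theorem isPullback_terminal_from (hφ : Equifibered φ) (X : C) :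
    IsPullback (φ.app X) (S.map (terminal.from X)) (T.map (terminal.from X)) (φ.app (⊤_ C)) :=
  (hφ _).flip

variable [HasPullbacks C]

noncomputable def isoToOverMapTerminalCompPullback (hφ : Equifibered φ) :
    S ≅ T.toOverMapTerminal ⋙ Over.pullback (φ.app (⊤_ C)) ⋙ Over.forget _ :=
  NatIso.ofComponents (fun X => (hφ.isPullback_terminal_from X).isoPullback) fun {X Y} g => by
    dsimp [Functor.toOverMapTerminal]
    apply pullback.hom_ext
    · simp only [Category.assoc, IsPullback.isoPullback_hom_fst, naturality,
        Over.pullback_map_left, Over.mk_left, Over.mk_hom, Over.homMk_left]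
      erw [pullback.lift_fst]
      simp
    · simp only [Category.assoc, IsPullback.isoPullback_hom_snd,
        Over.pullback_map_left, Over.mk_left, Over.mk_hom, Over.homMk_left]
      erw [pullback.lift_snd]
      simp [← S.map_comp]

theorem preservesColimitsOfShape {J : Type*} [Category J] (hφ : Equifibered φ)
    [PreservesColimitsOfShape J T] [PreservesColimitsOfShape J (Over.pullback (φ.app (⊤_ C)))] :
    PreservesColimitsOfShape J S :=
  have := hasBinaryProducts_of_hasTerminal_and_pullbacks C
  preservesColimitsOfShape_of_natIso hφ.isoToOverMapTerminalCompPullback.symm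

end NatTrans.Equifibered

end CategoryTheory

theorem cartesian_over_cocontinuous_is_cocontinuous_general
    {V : Type u} [Category.{v} V] [HasTerminal V] [HasPullbacks V]
    (lcc : ∀ {X Y : V} (f : X ⟶ Y), (Over.pullback f).IsLeftAdjoint)
    (S T : V ⥤ V) (φ : S ⟶ T)
    (hφ : ∀ {X Y : V} (g : X ⟶ Y),
      IsPullback (S.map g) (φ.app X) (φ.app Y) (T.map g))
    [PreservesColimits T] :
    PreservesColimits S := by
  have : (Over.pullback (φ.app (⊤_ V))).IsLeftAdjoint := lcc _
  have hφ' : NatTrans.Equifibered φ := fun _ _ g => hφ g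
  exact ⟨hφ'.preservesColimitsOfShape⟩

/-- let `V` be a locally cartesian closed category (every pullback functor
between slices has a right adjoint, i.e. is a left adjoint) with a terminal object and
all small colimits, and let `φ : S ⟶ T` be a cartesian natural transformation between
endofunctors of `V` (every naturality square is a pullback). If `T` preserves all small
colimits then so does `S`. -/
theorem cartesian_over_cocontinuous_is_cocontinuous
    {V : Type u} [Category.{v} V] [HasTerminal V] [HasColimits V] [HasPullbacks V]
    (lcc : ∀ {X Y : V} (f : X ⟶ Y), (Over.pullback f).IsLeftAdjoint)
    (S T : V ⥤ V) (φ : S ⟶ T)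
    (hφ : ∀ {X Y : V} (g : X ⟶ Y),
      IsPullback (S.map g) (φ.app X) (φ.app Y) (T.map g))
    [PreservesColimits T] :
    PreservesColimits S :=
  cartesian_over_cocontinuous_is_cocontinuous_general lcc S T φ hφ
end

section
/- Let V be a category with small products and finite coproducts and let A₁,…,Aₙ and B be V-enriched graphs. Then morphisms F : ⊛ᵢAᵢ → B of V-graphs are in bijection, naturally in B, with families (f₀, f_{z,a,b}) consisting of: a function f₀ : ∏ᵢ A_{i,0} → B₀, together with, for each 1 ≤ i* ≤ n, each tuple z ∈ ∏_{i ≠ i*} A_{i,0} and each pair a, b ∈ A_{i*,0}, a morphism f_{z,a,b} : A_{i*}(a,b) → B(f₀(z|_{i*}a), f₀(z|_{i*}b)) in V, where z|_{i*}a denotes the tuple obtained from z by inserting a in position i*. The bijection sends F to the family with f₀ the object map of F and f_{z,a,b} the hom map of F at (z|_{i*}a, z|_{i*}b), precomposed with the i*-th coproduct injection into ∐ᵢ Aᵢ(aᵢ,aᵢ) when a = b. -/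
open CategoryTheory Limits

universe v u

attribute [local instance] Classical.propDecidable

/-- A `V`-enriched graph: a set of objects together with an object of `V` for each
ordered pair of objects. -/
structure VGraph (V : Type u) [Category.{v} V] where
  carrier : Type v
  hom : carrier → carrier → V

namespace VGraph

variable {V : Type u} [Category.{v} V]

/-- A morphism of `V`-enriched graphs: a function on objects together with hom maps. -/
structure Hom (X Y : VGraph V) where
  obj : X.carrier → Y.carrier
  map : ∀ a b : X.carrier, X.hom a b ⟶ Y.hom (obj a) (obj b)

theorem Hom.mk_eq {X Y : VGraph V} (o : X.carrier → Y.carrier)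
    (m m' : ∀ a b : X.carrier, X.hom a b ⟶ Y.hom (o a) (o b))
    (h : ∀ a b, m a b = m' a b) : Hom.mk o m = Hom.mk o m' := by
  have : m = m' := funext fun a => funext fun b => h a b
  rw [this]

instance : Category (VGraph V) where
  Hom := Hom
  id X := ⟨fun a => a, fun _ _ => 𝟙 _⟩
  comp f g := ⟨fun a => g.obj (f.obj a), fun a b => f.map a b ≫ g.map _ _⟩
  id_comp f := Hom.mk_eq f.obj (fun a b => 𝟙 _ ≫ f.map a b) f.map
    (fun _ _ => Category.id_comp _)
  comp_id f := Hom.mk_eq f.obj (fun a b => f.map a b ≫ 𝟙 _) f.map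
    (fun _ _ => Category.comp_id _)
  assoc f g h := Hom.mk_eq _
    (fun a b => (f.map a b ≫ g.map _ _) ≫ h.map _ _)
    (fun a b => f.map a b ≫ (g.map _ _ ≫ h.map _ _))
    (fun _ _ => Category.assoc _ _ _)

/-- The object map of a morphism of `V`-graphs, as a morphism in the category. -/
abbrev obj' {X Y : VGraph V} (f : X ⟶ Y) : X.carrier → Y.carrier := Hom.obj f

/-- The binary free product of `V`-enriched graphs. -/
noncomputable def freeProd [HasBinaryCoproducts V] [HasInitial V]
    (A B : VGraph V) : VGraph V where
  carrier := A.carrier × B.carrier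
  hom x y :=
    if x = y then A.hom x.1 y.1 ⨿ B.hom x.2 y.2
    else if x.2 = y.2 then A.hom x.1 y.1
    else if x.1 = y.1 then B.hom x.2 y.2
    else ⊥_ V

/-- The unit `V`-graph `0`, with a single object and hom the initial object. -/
noncomputable def unitGraph [HasInitial V] : VGraph V :=
  ⟨PUnit, fun _ _ => ⊥_ V⟩

/-- The internal hom of `V`-graphs: objects are `V`-graph morphisms `A ⟶ B` and homs
are the products `∏_{a ∈ A} B(f a, g a)`. -/
noncomputable def homGraph [HasProducts.{v} V] (A B : VGraph V) : VGraph V where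
  carrier := A ⟶ B
  hom f g := ∏ᶜ fun a : A.carrier => B.hom (f.obj a) (g.obj a)

end VGraph

namespace VGraph

variable {V : Type u} [Category.{v} V] {n : ℕ}

/-- Insertion of `a` in position `i₀` into a tuple `z` defined away from `i₀`. -/
def ins (A : Fin n → VGraph V) (i₀ : Fin n) (z : ∀ i, i ≠ i₀ → (A i).carrier)
    (a : (A i₀).carrier) : ∀ i, (A i).carrier := fun i =>
  if h : i = i₀ then cast (congrArg (fun j => (A j).carrier) h).symm a else z i h

theorem ins_self (A : Fin n → VGraph V) (i₀ : Fin n)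
    (z : ∀ i, i ≠ i₀ → (A i).carrier) (a : (A i₀).carrier) :
    ins A i₀ z a i₀ = a := by
  simp [ins]

theorem ins_ne (A : Fin n → VGraph V) (i₀ : Fin n)
    (z : ∀ i, i ≠ i₀ → (A i).carrier) (a : (A i₀).carrier) {i : Fin n} (h : i ≠ i₀) :
    ins A i₀ z a i = z i h := by
  simp [ins, h]

/-- The `n`-ary free product of `V`-enriched graphs: the object set is the product of
the object sets, and the hom from `a` to `b` is `∐ᵢ Aᵢ(aᵢ,bᵢ)` when `a = b`,
is `A_j(a_j,b_j)` when `aᵢ = bᵢ` for all `i ≠ j`, and is initial otherwise. -/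
noncomputable def freeProdN [HasFiniteCoproducts V] (A : Fin n → VGraph V) :
    VGraph V where
  carrier := ∀ i, (A i).carrier
  hom a b :=
    if a = b then ∐ fun i => (A i).hom (a i) (b i)
    else if h : ∃ j, ∀ i, i ≠ j → a i = b i then
      (A h.choose).hom (a h.choose) (b h.choose)
    else ⊥_ V

theorem freeProdN_hom_self [HasFiniteCoproducts V] (A : Fin n → VGraph V)
    (x : ∀ i, (A i).carrier) :
    (freeProdN A).hom x x = ∐ fun i => (A i).hom (x i) (x i) := by
  simp [freeProdN]

theorem freeProdN_hom_ins [HasFiniteCoproducts V] (A : Fin n → VGraph V) (i₀ : Fin n)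
    (z : ∀ i, i ≠ i₀ → (A i).carrier) (a b : (A i₀).carrier) (hab : a ≠ b) :
    (freeProdN A).hom (ins A i₀ z a) (ins A i₀ z b) = (A i₀).hom a b := by
  have hne : ins A i₀ z a ≠ ins A i₀ z b := fun e =>
    hab (by rw [← ins_self A i₀ z a, ← ins_self A i₀ z b, e])
  have hex : ∃ j, ∀ i, i ≠ j → ins A i₀ z a i = ins A i₀ z b i :=
    ⟨i₀, fun i hi => by rw [ins_ne A i₀ z a hi, ins_ne A i₀ z b hi]⟩
  have hch : hex.choose = i₀ := by
    by_contra hc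
    exact hab (by
      have := hex.choose_spec i₀ (fun e => hc e.symm)
      rwa [ins_self, ins_self] at this)
  show (if _ then _ else _) = _
  rw [if_neg hne, dif_pos hex]
  generalize hq : hex.choose = j
  rw [hq] at hch
  subst hch
  rw [ins_self, ins_self]

/-- A family of "hom maps in each variable separately" out of a family of graphs:
an object map together with, for each variable `i₀`, each point `z` of the remaining
graphs and each pair of objects of `A i₀`, a single hom map in `V`. -/
structure FPFam (A : Fin n → VGraph V) (B : VGraph V) where
  obj : (∀ i, (A i).carrier) → B.carrier
  map : ∀ (i₀ : Fin n) (z : ∀ i, i ≠ i₀ → (A i).carrier) (a b : (A i₀).carrier),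
    (A i₀).hom a b ⟶ B.hom (obj (ins A i₀ z a)) (obj (ins A i₀ z b))

/-- The canonical map `(A i₀)(a,b) ⟶ (⊛A)(z|a, z|b)`: the `i₀`-th coproduct
injection when `a = b`, and the canonical identification otherwise. -/
noncomputable def fpIncl [HasFiniteCoproducts V] (A : Fin n → VGraph V) (i₀ : Fin n)
    (z : ∀ i, i ≠ i₀ → (A i).carrier) (a b : (A i₀).carrier) :
    (A i₀).hom a b ⟶ (freeProdN A).hom (ins A i₀ z a) (ins A i₀ z b) :=
  if h : a = b then
    eqToHom (by rw [ins_self, ins_self]) ≫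
      Sigma.ι (fun i => (A i).hom (ins A i₀ z a i) (ins A i₀ z b i)) i₀ ≫
      eqToHom (by subst h; exact (freeProdN_hom_self A (ins A i₀ z a)).symm)
  else eqToHom (freeProdN_hom_ins A i₀ z a b h).symm

/-- The family associated to a morphism of `V`-graphs out of the free product:
its object map, together with its hom maps at the pairs `(z|a, z|b)`, precomposed
with the `i₀`-th coproduct injection when `a = b`. -/
noncomputable def toFam [HasFiniteCoproducts V] (A : Fin n → VGraph V) (B : VGraph V)
    (F : freeProdN A ⟶ B) : FPFam A B where
  obj := F.obj
  map i₀ z a b := fpIncl A i₀ z a b ≫ F.map _ _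

/-- Postcomposition of a family by a morphism of `V`-graphs. -/
def FPFam.post {A : Fin n → VGraph V} {B B' : VGraph V} (g : B ⟶ B')
    (P : FPFam A B) : FPFam A B' where
  obj := fun x => g.obj (P.obj x)
  map i₀ z a b := P.map i₀ z a b ≫ g.map _ _

end VGraph

open VGraph

/-!
The homs of `⊛ᵢ Aᵢ` are jointly covered by the maps `fpIncl`: on the diagonal they are the
coproduct injections, between tuples differing in one coordinate they are identifications,
and every other hom is initial. So a morphism out of `⊛ᵢ Aᵢ` is determined by its object map
and its composites with the `fpIncl`, and conversely a family is assembled into a morphism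
case by case: by the universal property of the coproduct on the diagonal, by transport
between tuples differing in one coordinate, and by initiality elsewhere.
-/

namespace VGraph

variable {V : Type u} [Category.{v} V] {n : ℕ} {A : Fin n → VGraph V}

def res (A : Fin n → VGraph V) (i₀ : Fin n) (a : ∀ i, (A i).carrier) :
    ∀ i, i ≠ i₀ → (A i).carrier := fun i _ => a i

theorem ins_res_of_forall_ne (j : Fin n) {a b : ∀ i, (A i).carrier}
    (h : ∀ i, i ≠ j → a i = b i) : ins A j (res A j a) (b j) = b := by
  funext i
  by_cases hi : i = j
  · subst hi
    exact ins_self A i _ _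
  · rw [ins_ne A j _ _ hi]
    exact h i hi

theorem ins_res (i₀ : Fin n) (a : ∀ i, (A i).carrier) : ins A i₀ (res A i₀ a) (a i₀) = a :=
  ins_res_of_forall_ne i₀ fun _ _ => rfl

theorem res_ins (i₀ : Fin n) (z : ∀ i, i ≠ i₀ → (A i).carrier) (a : (A i₀).carrier) :
    res A i₀ (ins A i₀ z a) = z := by
  funext i hi
  exact ins_ne A i₀ z a hi

theorem eq_of_forall_ne_ins_eq {i₀ j : Fin n} {z : ∀ i, i ≠ i₀ → (A i).carrier}
    {a b : (A i₀).carrier} (hab : a ≠ b)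
    (h : ∀ i, i ≠ j → ins A i₀ z a i = ins A i₀ z b i) : j = i₀ := by
  by_contra hj
  apply hab
  simpa only [ins_self] using h i₀ (Ne.symm hj)

theorem fpIncl_of_ne [HasFiniteCoproducts V] (i₀ : Fin n) (z : ∀ i, i ≠ i₀ → (A i).carrier)
    {x y : (A i₀).carrier} (hxy : x ≠ y) :
    fpIncl A i₀ z x y = eqToHom (freeProdN_hom_ins A i₀ z x y hxy).symm :=
  dif_neg hxy

theorem freeProdN_hom_trichotomy [HasFiniteCoproducts V] (a b : ∀ i, (A i).carrier) :
    a = b ∨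
    (∃ (i₀ : Fin n) (z : ∀ i, i ≠ i₀ → (A i).carrier) (x y : (A i₀).carrier),
      x ≠ y ∧ a = ins A i₀ z x ∧ b = ins A i₀ z y) ∨
    (freeProdN A).hom a b = ⊥_ V := by
  by_cases hab : a = b
  · exact Or.inl hab
  by_cases hj : ∃ j, ∀ i, i ≠ j → a i = b i
  · obtain ⟨j, hj⟩ := hj
    refine Or.inr (Or.inl ⟨j, res A j a, a j, b j, fun e => hab ?_, (ins_res j a).symm,
      (ins_res_of_forall_ne j hj).symm⟩)
    rw [← ins_res j a, e, ins_res_of_forall_ne j hj]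
  · exact Or.inr (Or.inr (by simp [freeProdN, hab, hj]))

theorem freeProdN_map_ext [HasFiniteCoproducts V]
    {T : (∀ i, (A i).carrier) → (∀ i, (A i).carrier) → V}
    {m m' : ∀ a b, (freeProdN A).hom a b ⟶ T a b}
    (h : ∀ i₀ z (x y : (A i₀).carrier),
      fpIncl A i₀ z x y ≫ m _ _ = fpIncl A i₀ z x y ≫ m' _ _) :
    m = m' := by
  funext a b
  rcases freeProdN_hom_trichotomy a b with rfl | ⟨i₀, z, x, y, hxy, rfl, rfl⟩ | hbot
  · rw [← cancel_epi (eqToHom (freeProdN_hom_self A a).symm)]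
    refine Sigma.hom_ext _ _ fun i₀ => ?_
    obtain ⟨z, x, rfl⟩ : ∃ z x, ins A i₀ z x = a := ⟨_, _, ins_res i₀ a⟩
    have := h i₀ z x x
    simp only [fpIncl, dif_pos, Category.assoc, cancel_epi] at this
    exact this
  · have := h i₀ z x y
    rwa [fpIncl_of_ne i₀ z hxy, cancel_epi] at this
  · exact (initialIsInitial.ofIso (eqToIso hbot.symm)).hom_ext _ _

theorem toFam_injective [HasFiniteCoproducts V] (A : Fin n → VGraph V) (B : VGraph V) :
    Function.Injective (toFam A B) := by
  rintro ⟨f, m⟩ ⟨f', m'⟩ h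
  obtain ⟨rfl, hm⟩ := FPFam.mk.inj h
  congr
  exact freeProdN_map_ext fun i₀ z x y => congrFun (congrFun₃ (eq_of_heq hm) i₀ z x) y

namespace FPFam

variable {B : VGraph V}

def mapAt (P : FPFam A B) (j : Fin n) {a b : ∀ i, (A i).carrier} (h : ∀ i, i ≠ j → a i = b i) :
    (A j).hom (a j) (b j) ⟶ B.hom (P.obj a) (P.obj b) :=
  P.map j (res A j a) (a j) (b j) ≫ eqToHom (by rw [ins_res, ins_res_of_forall_ne j h])

theorem map_congr (P : FPFam A B) (i₀ : Fin n) {z z' : ∀ i, i ≠ i₀ → (A i).carrier}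
    {x x' y y' : (A i₀).carrier} (hz : z = z') (hx : x = x') (hy : y = y') :
    P.map i₀ z x y =
      eqToHom (by rw [hx, hy]) ≫ P.map i₀ z' x' y' ≫ eqToHom (by rw [hz, hx, hy]) := by
  subst hz hx hy
  simp

theorem map_eq_mapAt (P : FPFam A B) (i₀ : Fin n) (z : ∀ i, i ≠ i₀ → (A i).carrier)
    (x y : (A i₀).carrier) (h : ∀ i, i ≠ i₀ → ins A i₀ z x i = ins A i₀ z y i) :
    P.map i₀ z x y = eqToHom (by rw [ins_self, ins_self]) ≫ P.mapAt i₀ h := by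
  rw [mapAt, P.map_congr i₀ (res_ins i₀ z x).symm (ins_self A i₀ z x).symm
    (ins_self A i₀ z y).symm]

theorem eqToHom_comp_mapAt_congr (P : FPFam A B) {a b : ∀ i, (A i).carrier} {X : V}
    {j j' : Fin n} (hjj : j = j') (hj : ∀ i, i ≠ j → a i = b i) (hj' : ∀ i, i ≠ j' → a i = b i)
    (e : X = (A j).hom (a j) (b j)) (e' : X = (A j').hom (a j') (b j')) :
    eqToHom e ≫ P.mapAt j hj = eqToHom e' ≫ P.mapAt j' hj' := by
  subst hjj
  rfl

variable [HasFiniteCoproducts V]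

/-- Reducible, so that `P.toHom.obj` and `P.obj` are identified when rewriting. -/
noncomputable abbrev toHom (P : FPFam A B) : freeProdN A ⟶ B where
  obj := P.obj
  map a b :=
    if hab : a = b then
      eqToHom (by subst hab; exact freeProdN_hom_self A a) ≫
        Sigma.desc fun i => P.mapAt i fun k _ => congrFun hab k
    else if h : ∃ j, ∀ i, i ≠ j → a i = b i then
      eqToHom (by simp only [freeProdN, dif_pos h]; exact if_neg hab) ≫
        P.mapAt h.choose h.choose_spec
    else
      eqToHom (show (freeProdN A).hom a b = ⊥_ V by
        simp only [freeProdN, dif_neg h]; exact if_neg hab) ≫ initial.to _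

theorem toHom_map_self (P : FPFam A B) (a : ∀ i, (A i).carrier) :
    P.toHom.map a a =
      eqToHom (freeProdN_hom_self A a) ≫ Sigma.desc fun i => P.mapAt i fun _ _ => rfl :=
  dif_pos rfl

theorem toHom_map_of_ne (P : FPFam A B) {a b : ∀ i, (A i).carrier} (hab : a ≠ b)
    (h : ∃ j, ∀ i, i ≠ j → a i = b i) :
    P.toHom.map a b = eqToHom (by simp [freeProdN, hab, h]) ≫ P.mapAt h.choose h.choose_spec :=
  (dif_neg hab).trans (dif_pos h)

theorem fpIncl_comp_toHom_map (P : FPFam A B) (i₀ : Fin n) (z : ∀ i, i ≠ i₀ → (A i).carrier)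
    (x y : (A i₀).carrier) : fpIncl A i₀ z x y ≫ P.toHom.map _ _ = P.map i₀ z x y := by
  have hi₀ : ∀ i, i ≠ i₀ → ins A i₀ z x i = ins A i₀ z y i := fun i hi => by
    rw [ins_ne A i₀ z x hi, ins_ne A i₀ z y hi]
  by_cases hxy : x = y
  · subst hxy
    rw [toHom_map_self, P.map_eq_mapAt i₀ z x x hi₀]
    simp [fpIncl]
  · have hne : ins A i₀ z x ≠ ins A i₀ z y := fun e =>
      hxy (by simpa only [ins_self] using congrFun e i₀)
    have hex : ∃ j, ∀ i, i ≠ j → ins A i₀ z x i = ins A i₀ z y i := ⟨i₀, hi₀⟩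
    rw [fpIncl_of_ne i₀ z hxy, toHom_map_of_ne P hne hex,
      P.eqToHom_comp_mapAt_congr (eq_of_forall_ne_ins_eq hxy hex.choose_spec) _ hi₀ _
        (by rw [freeProdN_hom_ins A i₀ z x y hxy, ins_self, ins_self]),
      P.map_eq_mapAt i₀ z x y hi₀]
    simp

theorem toFam_toHom (P : FPFam A B) : toFam A B P.toHom = P := by
  obtain ⟨o, m⟩ := P
  refine congrArg (FPFam.mk o) ?_
  funext i₀ z x y
  exact fpIncl_comp_toHom_map _ i₀ z x y

end FPFam

theorem toFam_comp [HasFiniteCoproducts V] (A : Fin n → VGraph V) {B B' : VGraph V}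
    (g : B ⟶ B') (F : freeProdN A ⟶ B) : toFam A B' (F ≫ g) = (toFam A B F).post g := by
  refine congrArg (FPFam.mk _) ?_
  funext i₀ z x y
  exact (Category.assoc _ _ _).symm

end VGraph

theorem freeProdN_hom_bijection_general (V : Type u) [Category.{v} V]
    [HasFiniteCoproducts V] {n : ℕ} (A : Fin n → VGraph V) (B : VGraph V) :
    Function.Bijective (toFam A B) ∧
    ∀ (B' : VGraph V) (g : B ⟶ B') (F : freeProdN A ⟶ B),
      toFam A B' (F ≫ g) = (toFam A B F).post g :=
  ⟨⟨toFam_injective A B, fun P => ⟨P.toHom, P.toFam_toHom⟩⟩, fun _ => toFam_comp A⟩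

/-- for `V` with small products and finite coproducts, morphisms of
`V`-graphs out of the free product `⊛ᵢ Aᵢ` correspond bijectively, naturally in `B`,
to families consisting of an object map together with hom maps in each variable
separately. -/
theorem freeProdN_hom_bijection (V : Type u) [Category.{v} V] [HasProducts.{v} V]
    [HasFiniteCoproducts V] {n : ℕ} (A : Fin n → VGraph V) (B : VGraph V) :
    Function.Bijective (toFam A B) ∧
    ∀ (B' : VGraph V) (g : B ⟶ B') (F : freeProdN A ⟶ B),
      toFam A B' (F ≫ g) = (toFam A B F).post g :=
  freeProdN_hom_bijection_general V A B
end

section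
/- Let V be a category with an initial object ∅, let 0 denote the V-graph with one object and hom ∅, and let (T,η,μ) be a monad on V-Graph over Set. Suppose the Eilenberg–Moore category of T-algebras has a terminal object 1. Then any T-algebra morphism e : 1 → (T0, μ₀) is an isomorphism; in particular, if such a morphism exists then the free T-algebra (T0, μ₀) on 0 is terminal in the category of T-algebras. -/
open CategoryTheory Limits

universe v u

attribute [local instance] Classical.propDecidable

open VGraph

/-- A monad on the category of `V`-enriched graphs lying over `Set`: the underlying
functor preserves the object sets, and the unit and multiplication have identity
object maps. -/
structure MonadOverSet (V : Type u) [Category.{v} V] where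
  T : Monad (VGraph V)
  carrier_eq : ∀ X : VGraph V, (T.obj X).carrier = X.carrier
  map_obj : ∀ {X Y : VGraph V} (f : X ⟶ Y) (a : (T.obj X).carrier),
    (T.map f).obj a = cast (carrier_eq Y).symm (f.obj (cast (carrier_eq X) a))
  η_obj : ∀ (X : VGraph V) (a : X.carrier),
    (T.η.app X).obj a = cast (carrier_eq X).symm a
  μ_obj : ∀ (X : VGraph V) (a : (T.obj (T.obj X)).carrier),
    (T.μ.app X).obj a = cast (carrier_eq (T.obj X)) a

lemma unit_hom_ext {V : Type u} [Category.{v} V] [HasInitial V] {Y : VGraph V}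
    (hY : Subsingleton Y.carrier) (f g : unitGraph ⟶ Y) : f = g := by
  obtain ⟨fo, fm⟩ := f
  obtain ⟨go, gm⟩ := g
  have ho : fo = go := funext fun a => hY.elim _ _
  subst ho
  exact Hom.mk_eq fo fm gm fun a b => initial.hom_ext _ _

/-- for a monad `T` over `Set` on `V`-enriched graphs (`V` with an
initial object), if the Eilenberg–Moore category of `T` has a terminal object, then
every `T`-algebra morphism from the terminal algebra to the free algebra `(T0, μ₀)` on
the one-object graph `0` is an isomorphism; in particular if such a morphism exists
then `(T0, μ₀)` is terminal in the category of `T`-algebras. -/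
theorem free_algebra_on_unit_terminal (V : Type u) [Category.{v} V] [HasInitial V]
    (M : MonadOverSet V) (Term : M.T.Algebra) (hTerm : IsTerminal Term) :
    (∀ e : Term ⟶ M.T.free.obj unitGraph, IsIso e) ∧
    (Nonempty (Term ⟶ M.T.free.obj unitGraph) →
      Nonempty (IsTerminal (M.T.free.obj (unitGraph : VGraph V)))) := by
  have hsub : Subsingleton ((M.T.free.obj (unitGraph : VGraph V)).A).carrier := by
    have h := M.carrier_eq (unitGraph : VGraph V)
    have hs : Subsingleton (unitGraph : VGraph V).carrier := by
      unfold unitGraph; infer_instance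
    exact (Equiv.cast h).subsingleton
  have key : ∀ e : Term ⟶ M.T.free.obj unitGraph, IsIso e := by
    intro e
    refine ⟨hTerm.from _, hTerm.hom_ext _ _, ?_⟩
    apply ((Monad.adj M.T).homEquiv _ _).injective
    exact unit_hom_ext hsub _ _
  refine ⟨key, fun ⟨e⟩ => ⟨?_⟩⟩
  have := key e
  exact hTerm.ofIso (asIso e)
end
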